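/- arXiv:1302.1157 — 5 statements merged into one kernel-verified Lean document; each statement's English description precedes it below -/
import Mathlib

section
/- Deterministic recursion lemma (Lemma 1): Let v, α, β : ℕ → ℝ be sequences with v(i) ≤ (1 − α(i−1)) v(i−1) + β(i−1) for all i ≥ 1, ∑_{i=0}^∞ α(i) = ∞, 0 < α(i) ≤ 1 for all i, β(i) ≥ 0 for all i, and β(i)/α(i) → 0 as i → ∞. Then limsup_{i→∞} v(i) ≤ 0. In particular, if additionally v(i) ≥ 0 for all i, then v(i) → 0. -/
open Filter Topology

/-- **Deterministic recursion lemma** (Lemma 1): if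
`v(i) ≤ (1 − α(i−1)) v(i−1) + β(i−1)` with `∑ α(i) = ∞`, `0 < α(i) ≤ 1`, `β(i) ≥ 0`
and `β(i)/α(i) → 0`, then `limsup v(i) ≤ 0`; in particular if `v(i) ≥ 0` then `v(i) → 0`. -/
theorem deterministic_recursion_lemma (v a b : ℕ → ℝ)
    (hrec : ∀ i : ℕ, 1 ≤ i → v i ≤ (1 - a (i - 1)) * v (i - 1) + b (i - 1))
    (hasum : Tendsto (fun n => ∑ i ∈ Finset.range n, a i) atTop atTop)
    (ha : ∀ i, 0 < a i ∧ a i ≤ 1)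
    (hb : ∀ i, 0 ≤ b i)
    (hba : Tendsto (fun i => b i / a i) atTop (𝓝 0)) :
    limsup v atTop ≤ 0 ∧ ((∀ i, 0 ≤ v i) → Tendsto v atTop (𝓝 0)) := by
  have key : ∀ ε : ℝ, 0 < ε → ∀ᶠ i in atTop, v i ≤ ε := by
    intro ε hε
    obtain ⟨N, hN⟩ := Metric.tendsto_atTop.mp hba (ε / 2) (half_pos hε)
    have hbsmall : ∀ i, N ≤ i → b i ≤ (ε / 2) * a i := by
      intro i hi
      have h1 : |b i / a i| < ε / 2 := by simpa [Real.dist_eq, abs_div] using hN i hi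
      have h2 : b i / a i < ε / 2 := lt_of_le_of_lt (le_abs_self _) h1
      have h3 := (div_lt_iff₀ (ha i).1).mp h2
      linarith
    -- contraction step
    have hstep : ∀ i, N ≤ i → v (i + 1) - ε / 2 ≤ (1 - a i) * (v i - ε / 2) := by
      intro i hi
      have h1 := hrec (i + 1) (Nat.le_add_left 1 i)
      simp only [Nat.add_sub_cancel] at h1
      nlinarith [hbsmall i hi]
    set M : ℝ := max (v N - ε / 2) 0 with hMdef
    have hM : 0 ≤ M := le_max_right _ _
    have prodbound : ∀ i, N ≤ i →
        v i - ε / 2 ≤ (∏ j ∈ Finset.Ico N i, (1 - a j)) * M := by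
      intro i hi
      induction i, hi using Nat.le_induction with
      | base => simp [hMdef, le_max_left]
      | succ n hn ih =>
        have h1 := hstep n hn
        have h2 : (1 - a n) * (v n - ε / 2) ≤
            (1 - a n) * ((∏ j ∈ Finset.Ico N n, (1 - a j)) * M) :=
          mul_le_mul_of_nonneg_left ih (by linarith [(ha n).2])
        calc v (n + 1) - ε / 2 ≤ (1 - a n) * (v n - ε / 2) := h1
          _ ≤ (1 - a n) * ((∏ j ∈ Finset.Ico N n, (1 - a j)) * M) := h2
          _ = (∏ j ∈ Finset.Ico N (n + 1), (1 - a j)) * M := by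
              rw [Finset.prod_Ico_succ_top hn]; ring
    have expbound : ∀ i, (∏ j ∈ Finset.Ico N i, (1 - a j)) ≤
        Real.exp (-(∑ j ∈ Finset.Ico N i, a j)) := by
      intro i
      calc (∏ j ∈ Finset.Ico N i, (1 - a j))
          ≤ ∏ j ∈ Finset.Ico N i, Real.exp (-a j) :=
            Finset.prod_le_prod (fun j _ => by linarith [(ha j).2])
              (fun j _ => by linarith [Real.add_one_le_exp (-a j)])
        _ = Real.exp (-(∑ j ∈ Finset.Ico N i, a j)) := by
            rw [← Real.exp_sum, ← Finset.sum_neg_distrib]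
    have sumtend : Tendsto (fun i => ∑ j ∈ Finset.Ico N i, a j) atTop atTop := by
      have h1 : Tendsto (fun i => (∑ j ∈ Finset.range i, a j)
          - ∑ j ∈ Finset.range N, a j) atTop atTop :=
        tendsto_atTop_add_const_right _ _ hasum
      refine h1.congr' ?_
      filter_upwards [eventually_ge_atTop N] with i hi
      rw [Finset.sum_Ico_eq_sub _ hi]
    have exptend : Tendsto (fun i => Real.exp (-(∑ j ∈ Finset.Ico N i, a j)) * M)
        atTop (𝓝 0) := by
      have := (Real.tendsto_exp_atBot.comp (tendsto_neg_atTop_atBot.comp sumtend)).mul_const M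
      simpa using this
    have hev : ∀ᶠ i in atTop,
        Real.exp (-(∑ j ∈ Finset.Ico N i, a j)) * M < ε / 2 :=
      exptend.eventually_lt_const (half_pos hε)
    filter_upwards [hev, eventually_ge_atTop N] with i h1 h2
    have h3 := prodbound i h2
    have h4 : (∏ j ∈ Finset.Ico N i, (1 - a j)) * M ≤
        Real.exp (-(∑ j ∈ Finset.Ico N i, a j)) * M :=
      mul_le_mul_of_nonneg_right (expbound i) hM
    linarith
  constructor
  · rw [Filter.limsup_eq]
    by_cases hbdd : BddBelow {c | ∀ᶠ i in atTop, v i ≤ c}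
    · refine le_of_forall_pos_le_add (fun ε hε => ?_)
      have := csInf_le hbdd (key ε hε)
      linarith
    · rw [Real.sInf_of_not_bddBelow hbdd]
  · intro hv
    rw [Metric.tendsto_atTop]
    intro ε hε
    obtain ⟨N, hN⟩ := eventually_atTop.mp (key (ε / 2) (half_pos hε))
    exact ⟨N, fun n hn => by
      rw [Real.dist_eq, sub_zero, abs_of_nonneg (hv n)]
      linarith [hN n hn]⟩
end

section
/- Two-sided bound on the finite product ∏(1 − λμ/j)² (Lemma 4, inequality part): Let λ > 0 and μ > 0 with λμ not an integer, and set n₀ := ⌈λμ⌉. Then for all sufficiently large integers i, ( (1 − λμ/i)^{2i} · (n₀ − λμ + 1)^{2λμ} ) / ( (i − λμ)^{2λμ} · (1 − λμ/(n₀+1))^{2(n₀+1)} ) ≤ ∏_{j=n₀+2}^{i} (1 − λμ/j)² ≤ ( (1 − λμ/(i+1))^{2i+2} · (n₀ − λμ + 2)^{2λμ} ) / ( (i + 1 − λμ)^{2λμ} · (1 − λμ/(n₀+2))^{2(n₀+2)} ). -/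
/-!
With `c = λμ`, the logarithm of the product is `2 ∑ log (1 - c / j)`. On `(c, ∞)` the function
`log (1 - c / x) = log (x - c) - log x` is increasing and has the primitive
`F x = (x - c) log (x - c) - x log x`, so by the mean value theorem on each `[j, j + 1]` the sum is
squeezed between `F i - F (n₀ + 1)` and `F (i + 1) - F (n₀ + 2)`. Exponentiating,
`exp (2 F k) = (1 - c / k)^(2k) / (k - c)^(2c)`, which turns these two bounds into the displayed
ones.
-/

open Real Finset

section MonotoneDerivative

variable {F f : ℝ → ℝ}

theorem sub_mem_Icc_of_hasDerivAt_of_monotoneOn {x : ℝ}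
    (hF : ∀ y ∈ Set.Icc x (x + 1), HasDerivAt F (f y) y)
    (hf : MonotoneOn f (Set.Icc x (x + 1))) :
    F (x + 1) - F x ∈ Set.Icc (f x) (f (x + 1)) := by
  obtain ⟨ξ, hξ, hslope⟩ := exists_hasDerivAt_eq_slope F f (lt_add_one x)
    (fun y hy => (hF y hy).continuousAt.continuousWithinAt)
    (fun y hy => hF y (Set.Ioo_subset_Icc_self hy))
  rw [add_sub_cancel_left, div_one] at hslope
  have hξ' := Set.Ioo_subset_Icc_self hξ
  exact hslope ▸ ⟨hf (Set.left_mem_Icc.2 (by linarith)) hξ' hξ.1.le,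
    hf hξ' (Set.right_mem_Icc.2 (by linarith)) hξ.2.le⟩

variable {a : ℝ}

theorem sub_mem_Icc_of_hasDerivAt_of_monotoneOn_Ioi
    (hF : ∀ x ∈ Set.Ioi a, HasDerivAt F (f x) x) (hf : MonotoneOn f (Set.Ioi a))
    {x : ℝ} (hx : a < x) :
    F (x + 1) - F x ∈ Set.Icc (f x) (f (x + 1)) :=
  have hsub : Set.Icc x (x + 1) ⊆ Set.Ioi a := fun _ hy => hx.trans_le hy.1
  sub_mem_Icc_of_hasDerivAt_of_monotoneOn (fun y hy => hF y (hsub hy)) (hf.mono hsub)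

theorem sum_Ico_le_sub_of_monotoneOn
    (hF : ∀ x ∈ Set.Ioi a, HasDerivAt F (f x) x) (hf : MonotoneOn f (Set.Ioi a))
    {m k : ℕ} (ha : a < m) (hmk : m ≤ k) :
    ∑ j ∈ Ico m k, f j ≤ F k - F m := by
  rw [← sum_Ico_sub (fun j : ℕ => F j) hmk]
  gcongr with j hj
  have hj : a < j := ha.trans_le (Nat.cast_le.2 (mem_Ico.1 hj).1)
  exact_mod_cast (sub_mem_Icc_of_hasDerivAt_of_monotoneOn_Ioi hF hf hj).1

theorem sub_le_sum_Ico_of_monotoneOn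
    (hF : ∀ x ∈ Set.Ioi a, HasDerivAt F (f x) x) (hf : MonotoneOn f (Set.Ioi a))
    {m k : ℕ} (ha : a < m) (hmk : m ≤ k) :
    F k - F m ≤ ∑ j ∈ Ico m k, f (j + 1 : ℕ) := by
  rw [← sum_Ico_sub (fun j : ℕ => F j) hmk]
  gcongr with j hj
  have hj : a < j := ha.trans_le (Nat.cast_le.2 (mem_Ico.1 hj).1)
  exact_mod_cast (sub_mem_Icc_of_hasDerivAt_of_monotoneOn_Ioi hF hf hj).2

end MonotoneDerivative

noncomputable def logRatioPrimitive (c x : ℝ) : ℝ :=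
  (x - c) * log (x - c) - x * log x

theorem hasDerivAt_logRatioPrimitive {c x : ℝ} (hxc : x - c ≠ 0) (hx : x ≠ 0) :
    HasDerivAt (logRatioPrimitive c) (log (x - c) - log x) x := by
  have h : HasDerivAt (logRatioPrimitive c) ((log (x - c) + 1) * 1 - (log x + 1)) x :=
    ((hasDerivAt_mul_log hxc).comp (h₂ := fun y => y * log y) x
      ((hasDerivAt_id x).sub_const c)).sub (hasDerivAt_mul_log hx)
  exact h.congr_deriv (by ring)

theorem monotoneOn_log_sub_sub_log {c : ℝ} (hc : 0 ≤ c) :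
    MonotoneOn (fun x => log (x - c) - log x) (Set.Ioi c) := by
  intro x hx y hy hxy
  have hx : c < x := hx
  have hy : c < y := hy
  simp only
  rw [sub_le_sub_iff, ← log_mul (by linarith) (by linarith),
    ← log_mul (by linarith) (by linarith)]
  exact log_le_log (by nlinarith) (by nlinarith)

theorem one_sub_div_eq_exp {c x : ℝ} (hc : 0 ≤ c) (hx : c < x) :
    1 - c / x = exp (log (x - c) - log x) := by
  have hx0 : 0 < x := hc.trans_lt hx
  rw [← log_div (by linarith) hx0.ne', exp_log (div_pos (by linarith) hx0)]
  field_simp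

theorem one_sub_div_pow_div_rpow_eq_exp {c : ℝ} (hc : 0 ≤ c) {k : ℕ} (hk : c < k) :
    (1 - c / k) ^ (2 * k) / ((k : ℝ) - c) ^ (2 * c) = exp (2 * logRatioPrimitive c k) := by
  rw [one_sub_div_eq_exp hc hk, ← exp_nat_mul, rpow_def_of_pos (by linarith), ← exp_sub,
    logRatioPrimitive]
  push_cast
  ring_nf

theorem one_sub_div_pow_ratio_eq_exp {c : ℝ} (hc : 0 ≤ c) {k l : ℕ} (hk : c < k)
    (hl : c < l) :
    (1 - c / k) ^ (2 * k) * ((l : ℝ) - c) ^ (2 * c) /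
        (((k : ℝ) - c) ^ (2 * c) * (1 - c / l) ^ (2 * l)) =
      exp (2 * (logRatioPrimitive c k - logRatioPrimitive c l)) := by
  rw [← div_div_div_eq, one_sub_div_pow_div_rpow_eq_exp hc hk,
    one_sub_div_pow_div_rpow_eq_exp hc hl, ← exp_sub, mul_sub]

theorem prod_one_sub_div_sq_eq_exp {c : ℝ} (hc : 0 ≤ c) {s : Finset ℕ}
    (hs : ∀ j ∈ s, c < j) :
    ∏ j ∈ s, (1 - c / j) ^ 2 = exp (2 * ∑ j ∈ s, (log (j - c) - log j)) := by
  rw [mul_sum, exp_sum]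
  refine prod_congr rfl fun j hj => ?_
  rw [one_sub_div_eq_exp hc (hs j hj), ← exp_nat_mul]
  norm_num

/-- **Two-sided bound on the finite product `∏ (1 − λμ/j)²`** (Lemma 4, inequality part):
with `n₀ = ⌈λμ⌉` and `λμ` not an integer, for all sufficiently large `i`,
the product `∏_{j=n₀+2}^{i} (1 − λμ/j)²` is sandwiched between the two displayed bounds. -/
theorem product_two_sided_bound (lam mu : ℝ) (hlam : 0 < lam) (hmu : 0 < mu)
    (hnotint : ∀ n : ℕ, lam * mu ≠ (n : ℝ)) :
    ∃ i₀ : ℕ, ∀ i : ℕ, i₀ ≤ i →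
      ((1 - lam * mu / (i : ℝ)) ^ (2 * i) *
          ((⌈lam * mu⌉₊ : ℝ) - lam * mu + 1) ^ (2 * lam * mu)) /
        (((i : ℝ) - lam * mu) ^ (2 * lam * mu) *
          (1 - lam * mu / ((⌈lam * mu⌉₊ : ℝ) + 1)) ^ (2 * (⌈lam * mu⌉₊ + 1))) ≤
        ∏ j ∈ Finset.Icc (⌈lam * mu⌉₊ + 2) i, (1 - lam * mu / (j : ℝ)) ^ 2 ∧
      ∏ j ∈ Finset.Icc (⌈lam * mu⌉₊ + 2) i, (1 - lam * mu / (j : ℝ)) ^ 2 ≤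
        ((1 - lam * mu / ((i : ℝ) + 1)) ^ (2 * i + 2) *
            ((⌈lam * mu⌉₊ : ℝ) - lam * mu + 2) ^ (2 * lam * mu)) /
          (((i : ℝ) + 1 - lam * mu) ^ (2 * lam * mu) *
            (1 - lam * mu / ((⌈lam * mu⌉₊ : ℝ) + 2)) ^ (2 * (⌈lam * mu⌉₊ + 2))) := by
  rw [mul_assoc 2 lam mu]
  set c := lam * mu
  have hc : 0 ≤ c := (mul_pos hlam hmu).le
  set n := ⌈c⌉₊
  have hcn : c < n := (Nat.le_ceil c).lt_of_ne (hnotint n)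
  have hF (x : ℝ) (hx : x ∈ Set.Ioi c) :
      HasDerivAt (logRatioPrimitive c) (log (x - c) - log x) x :=
    hasDerivAt_logRatioPrimitive (sub_ne_zero.2 (ne_of_gt hx)) (hc.trans_lt hx).ne'
  have hf := monotoneOn_log_sub_sub_log hc
  refine ⟨n + 1, fun i hi => ?_⟩
  have hni : (n : ℝ) + 1 ≤ i := by exact_mod_cast hi
  have hlower := sub_le_sum_Ico_of_monotoneOn hF hf (m := n + 1) (by push_cast; linarith) hi
  have hupper := sum_Ico_le_sub_of_monotoneOn hF hf (m := n + 2) (k := i + 1)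
    (by push_cast; linarith) (by omega)
  rw [sum_Ico_add' (fun j : ℕ => log (j - c) - log j), Ico_add_one_right_eq_Icc] at hlower
  rw [Ico_add_one_right_eq_Icc] at hupper
  have hratio_lower := one_sub_div_pow_ratio_eq_exp hc (k := i) (l := n + 1)
    (by linarith) (by push_cast; linarith)
  have hratio_upper := one_sub_div_pow_ratio_eq_exp hc (k := i + 1) (l := n + 2)
    (by push_cast; linarith) (by push_cast; linarith)
  have hcj (j : ℕ) (hj : j ∈ Icc (n + 2) i) : c < j :=
    hcn.trans_le (by exact_mod_cast (mem_Icc.1 hj).1.trans' (Nat.le_add_right n 2))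
  push_cast at hratio_lower hratio_upper hlower hupper
  rw [prod_one_sub_div_sq_eq_exp hc hcj, show (n : ℝ) - c + 1 = n + 1 - c by ring,
    show (n : ℝ) - c + 2 = n + 2 - c by ring, show 2 * i + 2 = 2 * (i + 1) by ring,
    hratio_lower, hratio_upper, exp_le_exp, exp_le_exp]
  constructor <;> linarith
end

section
/- Asymptotics of the Gamma-ratio sum, case 2λμ > 1 (Lemma 6, first case): Let λ > 0 and μ > 0 with 2λμ > 1, and assume λμ is not an integer greater than or equal to 2 (so that Γ(j+1−λμ) is finite and nonzero for every integer j ≥ 1). Then lim_{i→∞} i^{1−2λμ} ∑_{j=1}^{i−1} ( Γ(j) / Γ(j+1−λμ) )² = 1/(2λμ − 1). -/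
/-!
By log-convexity of `Γ` (the Bohr–Mollerup bounds), `Γ(n) (n-1)^x ≤ Γ(n+x) ≤ Γ(n) n^x` for
`x ∈ (0, 1]`, and the recurrence `Γ(s+1) = s Γ(s)` shifts `x` by integers, so
`Γ(n+a) ~ Γ(n) n^a` for every real `a`. With `c = λμ` and `p = 2c - 1 > 0` the summand is therefore
`~ j^(p-1) ~ ((j+1)^p - j^p)/p`, whose partial sums telescope to `i^p/p`; Stolz–Cesàro transfers
this to the partial sums of the summand.
-/

open Filter Topology Real Asymptotics Finset

lemma isEquivalent_natCast_add_const (a : ℝ) :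
    (fun n : ℕ ↦ (n : ℝ) + a) ~[atTop] fun n ↦ (n : ℝ) :=
  IsEquivalent.refl.add_const_of_norm_tendsto_atTop
    (tendsto_norm_atTop_atTop.comp tendsto_natCast_atTop_atTop)

namespace Real

lemma log_Gamma_add_one {y : ℝ} (hy : 0 < y) :
    log (Gamma (y + 1)) = log (Gamma y) + log y := by
  rw [Gamma_add_one hy.ne', log_mul hy.ne' (Gamma_pos_of_pos hy).ne', add_comm]

lemma Gamma_nat_add_le_mul_rpow {n : ℕ} (hn : n ≠ 0) {x : ℝ} (hx : 0 < x) (hx1 : x ≤ 1) :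
    Gamma (n + x) ≤ Gamma n * (n : ℝ) ^ x := by
  have hn' : (0 : ℝ) < n := by positivity
  have h := BohrMollerup.f_add_nat_le convexOn_log_Gamma (fun hy ↦ log_Gamma_add_one hy) hn hx hx1
  simp only [Function.comp_apply] at h
  rwa [← log_rpow hn', ← log_mul (Gamma_pos_of_pos hn').ne' (rpow_pos_of_pos hn' x).ne',
    log_le_log_iff (Gamma_pos_of_pos (by positivity)) (by positivity)] at h

lemma Gamma_nat_mul_sub_one_rpow_le {n : ℕ} (hn : 2 ≤ n) {x : ℝ} (hx : 0 < x) :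
    Gamma n * ((n : ℝ) - 1) ^ x ≤ Gamma (n + x) := by
  have hn' : (0 : ℝ) < n - 1 := by
    have : (2 : ℝ) ≤ n := by exact_mod_cast hn
    linarith
  have hG : 0 < Gamma n := Gamma_pos_of_pos (by linarith)
  have h := BohrMollerup.f_add_nat_ge convexOn_log_Gamma (fun hy ↦ log_Gamma_add_one hy) hn hx
  simp only [Function.comp_apply] at h
  rwa [← log_rpow hn', ← log_mul hG.ne' (rpow_pos_of_pos hn' x).ne',
    log_le_log_iff (by positivity) (Gamma_pos_of_pos (by positivity))] at h

lemma isEquivalent_Gamma_nat_add_of_pos_of_le_one {x : ℝ} (hx : 0 < x) (hx1 : x ≤ 1) :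
    (fun n : ℕ ↦ Gamma (n + x)) ~[atTop] fun n ↦ Gamma n * (n : ℝ) ^ x := by
  refine isEquivalent_of_tendsto_one ?_
  have hlow : Tendsto (fun n : ℕ ↦ (1 - 1 / (n : ℝ)) ^ x) atTop (𝓝 1) := by
    simpa using (tendsto_one_div_atTop_nhds_zero_nat.const_sub 1).rpow_const (by norm_num)
  refine tendsto_of_tendsto_of_tendsto_of_le_of_le' hlow tendsto_const_nhds ?_ ?_
  · filter_upwards [eventually_ge_atTop 2] with n hn
    have hn' : (2 : ℝ) ≤ n := by exact_mod_cast hn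
    have hG := Gamma_pos_of_pos (s := n) (by linarith)
    rw [Pi.div_apply, le_div_iff₀ (by positivity), one_sub_div (by positivity),
      div_rpow (by linarith) (by positivity)]
    have := rpow_pos_of_pos (by linarith : (0 : ℝ) < n) x
    calc _ = Gamma n * ((n : ℝ) - 1) ^ x := by field_simp
      _ ≤ _ := Gamma_nat_mul_sub_one_rpow_le hn hx
  · filter_upwards [eventually_ne_atTop 0] with n hn
    have hG := Gamma_pos_of_pos (s := n) (by positivity)
    rw [Pi.div_apply, div_le_one (by positivity)]
    exact Gamma_nat_add_le_mul_rpow hn hx hx1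

lemma isEquivalent_Gamma_nat_add_add_one_iff (a : ℝ) :
    ((fun n : ℕ ↦ Gamma (n + (a + 1))) ~[atTop] fun n ↦ Gamma n * (n : ℝ) ^ (a + 1)) ↔
      (fun n : ℕ ↦ Gamma (n + a)) ~[atTop] fun n ↦ Gamma n * (n : ℝ) ^ a := by
  have hpos : ∀ᶠ n : ℕ in atTop, 0 < (n : ℝ) ∧ 0 < (n : ℝ) + a := by
    filter_upwards [tendsto_natCast_atTop_atTop.eventually_gt_atTop |a|] with n hn
    constructor <;> linarith [abs_nonneg a, neg_abs_le a]
  have hG : ∀ᶠ n : ℕ in atTop, Gamma (n + (a + 1)) = ((n : ℝ) + a) * Gamma (n + a) := by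
    filter_upwards [hpos] with n hn
    rw [← add_assoc, Gamma_add_one hn.2.ne']
  have hpow : ∀ᶠ n : ℕ in atTop,
      Gamma n * (n : ℝ) ^ (a + 1) = (n : ℝ) * (Gamma n * (n : ℝ) ^ a) := by
    filter_upwards [hpos] with n hn
    rw [rpow_add_one hn.1.ne']
    ring
  constructor
  · intro h
    refine ((h.div (isEquivalent_natCast_add_const a)).congr_left ?_).congr_right ?_
    · filter_upwards [hG, hpos] with n hGn hn
      simp only [Pi.div_apply, hGn, mul_div_cancel_left₀ _ hn.2.ne']
    · filter_upwards [hpow, hpos] with n hpn hn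
      simp only [Pi.div_apply, hpn, mul_div_cancel_left₀ _ hn.1.ne']
  · intro h
    refine (((isEquivalent_natCast_add_const a).mul h).congr_left ?_).congr_right ?_
    · filter_upwards [hG] with n hGn
      simp only [Pi.mul_apply, hGn]
    · filter_upwards [hpow] with n hpn
      simp only [Pi.mul_apply, hpn]

theorem isEquivalent_Gamma_nat_add (a : ℝ) :
    (fun n : ℕ ↦ Gamma (n + a)) ~[atTop] fun n ↦ Gamma n * (n : ℝ) ^ a := by
  set x := a - ⌈a⌉ + 1 with hx
  have hx0 : 0 < x := by linarith [Int.ceil_lt_add_one a]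
  have hx1 : x ≤ 1 := by linarith [Int.le_ceil a]
  suffices key : ∀ m : ℤ, ∀ b : ℝ, b = x + m →
      (fun n : ℕ ↦ Gamma (n + b)) ~[atTop] fun n ↦ Gamma n * (n : ℝ) ^ b from
    key (⌈a⌉ - 1) a (by rw [hx]; push_cast; ring)
  intro m
  induction m using Int.induction_on with
  | zero =>
    rintro b rfl
    simpa using isEquivalent_Gamma_nat_add_of_pos_of_le_one hx0 hx1
  | succ i ih =>
    rintro b rfl
    rw [← sub_add_cancel (x + _) 1]
    exact (isEquivalent_Gamma_nat_add_add_one_iff _).2 (ih _ (by push_cast; ring))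
  | pred i ih =>
    rintro b rfl
    exact (isEquivalent_Gamma_nat_add_add_one_iff _).1 (ih _ (by push_cast; ring))

end Real

theorem Asymptotics.IsEquivalent.sum_range {f g : ℕ → ℝ} (h : f ~[atTop] g) (hg : 0 ≤ g)
    (h'g : Tendsto (fun n ↦ ∑ i ∈ range n, g i) atTop atTop) :
    (fun n ↦ ∑ i ∈ range n, f i) ~[atTop] fun n ↦ ∑ i ∈ range n, g i := by
  show (fun n ↦ ∑ i ∈ range n, f i - ∑ i ∈ range n, g i) =o[atTop] _
  simpa only [Pi.sub_apply, ← sum_sub_distrib] using h.isLittleO.sum_range hg h'g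

theorem tendsto_add_one_rpow_sub_rpow_div_rpow_sub_one (p : ℝ) :
    Tendsto (fun x : ℝ ↦ ((x + 1) ^ p - x ^ p) / x ^ (p - 1)) atTop (𝓝 p) := by
  have hslope := hasDerivAt_iff_tendsto_slope.1
    (by simpa using hasDerivAt_rpow_const (x := 1) (p := p) (Or.inl one_ne_zero))
  have hshift : Tendsto (fun x : ℝ ↦ 1 + x⁻¹) atTop (𝓝[≠] 1) := by
    refine tendsto_nhdsWithin_iff.2
      ⟨by simpa using (tendsto_inv_atTop_zero (𝕜 := ℝ)).const_add 1, ?_⟩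
    filter_upwards [eventually_gt_atTop 0] with x hx
    simpa using hx.ne'
  refine (hslope.comp hshift).congr' ?_
  filter_upwards [eventually_gt_atTop 0] with x hx
  have hsplit : (x + 1) ^ p = x ^ p * (1 + x⁻¹) ^ p := by
    rw [← mul_rpow hx.le (by positivity), mul_add, mul_inv_cancel₀ hx.ne', mul_one]
  have := rpow_pos_of_pos hx p
  rw [Function.comp_apply, slope_def_field, one_rpow, add_sub_cancel_left, hsplit,
    rpow_sub_one hx.ne']
  field_simp

theorem isEquivalent_add_one_rpow_sub_rpow {p : ℝ} (hp : p ≠ 0) :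
    (fun x : ℝ ↦ (x + 1) ^ p - x ^ p) ~[atTop] fun x ↦ p * x ^ (p - 1) := by
  refine isEquivalent_of_tendsto_one ?_
  have h := (tendsto_add_one_rpow_sub_rpow_div_rpow_sub_one p).div_const p
  rw [div_self hp] at h
  exact h.congr fun x ↦ by rw [Pi.div_apply, div_div, mul_comm]

theorem isEquivalent_sum_range_of_isEquivalent_rpow {p : ℝ} (hp : 0 < p) {b : ℕ → ℝ}
    (hb : b ~[atTop] fun j ↦ (j : ℝ) ^ (p - 1)) :
    (fun n ↦ ∑ j ∈ range n, b j) ~[atTop] fun n ↦ (n : ℝ) ^ p / p := by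
  set g : ℕ → ℝ := fun j ↦ (((j : ℝ) + 1) ^ p - (j : ℝ) ^ p) / p
  have hg_nonneg : 0 ≤ g := fun j ↦
    div_nonneg (sub_nonneg.2 (rpow_le_rpow (by positivity) (by linarith) hp.le)) hp.le
  have hsum_g (n : ℕ) : ∑ j ∈ range n, g j = (n : ℝ) ^ p / p := by
    have := sum_range_sub (fun j : ℕ ↦ (j : ℝ) ^ p) n
    push_cast at this
    rw [← sum_div, this, zero_rpow hp.ne', sub_zero]
  have hbg : b ~[atTop] g := by
    refine hb.trans ?_
    have := ((isEquivalent_add_one_rpow_sub_rpow hp.ne').div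
      (IsEquivalent.refl (u := fun _ ↦ p))).symm.comp_tendsto tendsto_natCast_atTop_atTop
    refine this.congr_left (Eventually.of_forall fun j ↦ ?_)
    simp [mul_div_cancel_left₀ _ hp.ne']
  have htend : Tendsto (fun n ↦ ∑ j ∈ range n, g j) atTop atTop := by
    simp_rw [hsum_g]
    exact ((tendsto_rpow_atTop hp).comp tendsto_natCast_atTop_atTop).atTop_div_const hp
  exact (hbg.sum_range hg_nonneg htend).congr_right (Eventually.of_forall hsum_g)

theorem isEquivalent_Gamma_div_Gamma_add_one_sub_sq (c : ℝ) :
    (fun j : ℕ ↦ (Gamma j / Gamma (j + 1 - c)) ^ 2) ~[atTop] fun j ↦ (j : ℝ) ^ (2 * c - 2) := by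
  have h := (IsEquivalent.refl (u := fun j : ℕ ↦ Gamma j)).div (isEquivalent_Gamma_nat_add (1 - c))
  refine ((h.pow 2).congr_left (Eventually.of_forall fun j ↦ ?_)).congr_right ?_
  · simp only [Pi.pow_apply, Pi.div_apply, add_sub_assoc]
  · filter_upwards [eventually_gt_atTop 0] with j hj
    have hj' : (0 : ℝ) < j := by exact_mod_cast hj
    rw [Pi.pow_apply, Pi.div_apply, div_mul_cancel_left₀ (Gamma_pos_of_pos hj').ne',
      ← rpow_neg hj'.le, ← rpow_mul_natCast hj'.le]
    ring_nf

theorem tendsto_rpow_mul_sum_Gamma_div_Gamma_add_one_sub_sq {c : ℝ} (hc : 1 < 2 * c) :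
    Tendsto (fun i : ℕ ↦ (i : ℝ) ^ (1 - 2 * c) *
        ∑ j ∈ Icc 1 (i - 1), (Gamma j / Gamma (j + 1 - c)) ^ 2) atTop (𝓝 (1 / (2 * c - 1))) := by
  set b : ℕ → ℝ := fun j ↦ (Gamma j / Gamma (j + 1 - c)) ^ 2
  have hp : 0 < 2 * c - 1 := by linarith
  have hsum : (fun n ↦ ∑ j ∈ range n, b j) ~[atTop] fun n ↦ (n : ℝ) ^ (2 * c - 1) / (2 * c - 1) :=
    isEquivalent_sum_range_of_isEquivalent_rpow hp <| by
      simpa only [sub_sub, one_add_one_eq_two] using isEquivalent_Gamma_div_Gamma_add_one_sub_sq c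
  have hIcc (i : ℕ) : ∑ j ∈ Icc 1 (i - 1), b j = ∑ j ∈ range i, b j := by
    refine sum_subset (fun j hj ↦ by simp only [mem_Icc, mem_range] at hj ⊢; omega) ?_
    intro j hj hj'
    obtain rfl : j = 0 := by simp only [mem_Icc, mem_range] at hj hj'; omega
    simp [b]  -- `Γ 0 = 0` in Mathlib
  simp_rw [hIcc]
  have hscaled := (IsEquivalent.refl (u := fun i : ℕ ↦ (i : ℝ) ^ (1 - 2 * c))).mul hsum
  refine hscaled.symm.tendsto_nhds (tendsto_const_nhds.congr' ?_)
  filter_upwards [eventually_gt_atTop 0] with i hi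
  have hi' : (0 : ℝ) < i := by exact_mod_cast hi
  rw [Pi.mul_apply, mul_div_assoc', ← rpow_add hi', show 1 - 2 * c + (2 * c - 1) = 0 by ring,
    rpow_zero]

theorem gamma_ratio_sum_asymptotics_gt_general (lam mu : ℝ)
    (h2 : 1 < 2 * lam * mu) :
    Tendsto (fun i : ℕ => (i : ℝ) ^ (1 - 2 * lam * mu) *
        ∑ j ∈ Finset.Icc 1 (i - 1),
          (Real.Gamma (j : ℝ) / Real.Gamma ((j : ℝ) + 1 - lam * mu)) ^ 2)
      atTop (𝓝 (1 / (2 * lam * mu - 1))) := by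
  rw [mul_assoc] at h2 ⊢
  exact tendsto_rpow_mul_sum_Gamma_div_Gamma_add_one_sub_sq h2

/-- **Asymptotics of the Gamma-ratio sum, case `2λμ > 1`** (Lemma 6, first case):
`lim_{i→∞} i^{1−2λμ} ∑_{j=1}^{i−1} (Γ(j)/Γ(j+1−λμ))² = 1/(2λμ−1)`. -/
theorem gamma_ratio_sum_asymptotics_gt (lam mu : ℝ) (hlam : 0 < lam) (hmu : 0 < mu)
    (h2 : 1 < 2 * lam * mu)
    (hnotint : ∀ n : ℕ, 2 ≤ n → lam * mu ≠ (n : ℝ)) :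
    Tendsto (fun i : ℕ => (i : ℝ) ^ (1 - 2 * lam * mu) *
        ∑ j ∈ Finset.Icc 1 (i - 1),
          (Real.Gamma (j : ℝ) / Real.Gamma ((j : ℝ) + 1 - lam * mu)) ^ 2)
      atTop (𝓝 (1 / (2 * lam * mu - 1))) :=
  gamma_ratio_sum_asymptotics_gt_general lam mu h2
end

section
/- Asymptotics of the Gamma-ratio sum, case 2λμ < 1 (Lemma 6, third case): Let λ > 0 and μ > 0 with 0 < λμ < 1/2. Then the series ∑_{j=1}^∞ ( Γ(j) / Γ(j+1−λμ) )² converges, and its tails satisfy ∑_{j=i}^∞ ( Γ(j) / Γ(j+1−λμ) )² = Θ(i^{2λμ−1}) as i → ∞, i.e. there exist constants c₁, c₂ > 0 and an integer i₀ such that c₁ i^{2λμ−1} ≤ ∑_{j=i}^∞ (Γ(j)/Γ(j+1−λμ))² ≤ c₂ i^{2λμ−1} for all i ≥ i₀. -/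
/-!
Log-convexity of `Γ` (Hölder in Euler's integral) gives, for `0 < s < 1`, the Gautschi-type
bounds `x ^ (-s) ≤ Γ(x) / Γ(x + s) ≤ 2 x ^ (-s)`. With `s = 1 - λμ` the squared terms are thus
comparable to `n ^ (-p)`, `p = 2 - 2λμ > 1`. A tail of such a series is bounded above by
telescoping `(p - 1) (x + 1) ^ (-p) ≤ x ^ (1 - p) - (x + 1) ^ (1 - p)`, and below by its first
`i` terms, each at least a constant times `(2i) ^ (-p)`; both bounds are of order `i ^ (1 - p)`.
-/

open Real Finset

lemma Gamma_add_le_Gamma_mul_rpow {x s : ℝ} (hx : 0 < x) (hs₀ : 0 < s) (hs₁ : s < 1) :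
    Gamma (x + s) ≤ Gamma x * x ^ s := by
  have hΓ := Gamma_pos_of_pos hx
  calc Gamma (x + s) = Gamma ((1 - s) * x + s * (x + 1)) := by ring_nf
    _ ≤ Gamma x ^ (1 - s) * Gamma (x + 1) ^ s :=
      Gamma_mul_add_mul_le_rpow_Gamma_mul_rpow_Gamma hx (by linarith) (by linarith) hs₀ (by ring)
    _ = Gamma x ^ (1 - s + s) * x ^ s := by
      rw [Gamma_add_one hx.ne', mul_rpow hx.le hΓ.le, rpow_add hΓ]; ring
    _ = Gamma x * x ^ s := by rw [sub_add_cancel, rpow_one]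

lemma rpow_neg_le_Gamma_div_Gamma_add {x s : ℝ} (hx : 0 < x) (hs₀ : 0 < s) (hs₁ : s < 1) :
    x ^ (-s) ≤ Gamma x / Gamma (x + s) := by
  rw [rpow_neg hx.le, le_div_iff₀ (Gamma_pos_of_pos (by linarith)), inv_mul_le_iff₀ (by positivity)]
  exact (Gamma_add_le_Gamma_mul_rpow hx hs₀ hs₁).trans_eq (mul_comm _ _)

lemma Gamma_div_Gamma_add_le {x s : ℝ} (hs₀ : 0 < s) (hs₁ : s < 1) (hsx : s ≤ x) :
    Gamma x / Gamma (x + s) ≤ 2 * x ^ (-s) := by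
  have hx : 0 < x := hs₀.trans_le hsx
  have hΓ : 0 < Gamma (x + s) := Gamma_pos_of_pos (by linarith)
  have hstep : Gamma (x + 1) ≤ Gamma (x + s) * (x + s) ^ (1 - s) := by
    have := Gamma_add_le_Gamma_mul_rpow (x := x + s) (s := 1 - s) (by linarith) (by linarith)
      (by linarith)
    rwa [add_add_sub_cancel] at this
  have hpow : (x + s) ^ (1 - s) ≤ 2 * x ^ (-s) * x := calc
    (x + s) ^ (1 - s) ≤ (2 * x) ^ (1 - s) := by gcongr; linarith
    _ = 2 ^ (1 - s) * (x ^ (-s) * x) := by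
      rw [mul_rpow zero_le_two hx.le, sub_eq_neg_add, rpow_add hx, rpow_one]
    _ ≤ 2 ^ (1 : ℝ) * (x ^ (-s) * x) := by gcongr <;> linarith
    _ = 2 * x ^ (-s) * x := by rw [rpow_one, mul_assoc]
  rw [div_le_iff₀ hΓ]
  refine le_of_mul_le_mul_left ?_ hx
  calc x * Gamma x = Gamma (x + 1) := (Gamma_add_one hx.ne').symm
    _ ≤ Gamma (x + s) * (2 * x ^ (-s) * x) := hstep.trans (by gcongr)
    _ = x * (2 * x ^ (-s) * Gamma (x + s)) := by ring

lemma sq_Gamma_div_Gamma_add_mem_Icc {x s : ℝ} (hs₀ : 0 < s) (hs₁ : s < 1) (hsx : s ≤ x) :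
    (Gamma x / Gamma (x + s)) ^ 2 ∈ Set.Icc (x ^ (-(2 * s))) (4 * x ^ (-(2 * s))) := by
  have hx : 0 < x := hs₀.trans_le hsx
  have hsq : (x ^ (-s)) ^ 2 = x ^ (-(2 * s)) := by
    rw [← rpow_natCast, ← rpow_mul hx.le]; ring_nf
  have hlow := rpow_neg_le_Gamma_div_Gamma_add hx hs₀ hs₁
  constructor
  · rw [← hsq]; gcongr
  · calc (Gamma x / Gamma (x + s)) ^ 2 ≤ (2 * x ^ (-s)) ^ 2 := by
          gcongr
          exact Gamma_div_Gamma_add_le hs₀ hs₁ hsx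
      _ = 4 * x ^ (-(2 * s)) := by rw [mul_pow, hsq]; norm_num

lemma rpow_neg_le_sub_rpow {p x : ℝ} (hp : 1 ≤ p) (hx : 0 < x) :
    (p - 1) * (x + 1) ^ (-p) ≤ x ^ (1 - p) - (x + 1) ^ (1 - p) := by
  have hx₁ : 0 < x + 1 := by linarith
  set u := x / (x + 1) with hu
  have hu₀ : 0 < u := by positivity
  -- `u ^ (1 - p) = exp ((1 - p) log u) ≥ 1 + (1 - p) log u ≥ 1 + (1 - p) (u - 1)`
  have hbern : 1 + (p - 1) * (x + 1)⁻¹ ≤ u ^ (1 - p) := by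
    have hlog := log_le_sub_one_of_pos hu₀
    have h1u : 1 - u = (x + 1)⁻¹ := by rw [hu]; field_simp; ring
    rw [rpow_def_of_pos hu₀]
    nlinarith [add_one_le_exp (log u * (1 - p))]
  have hsplit : x ^ (1 - p) = u ^ (1 - p) * (x + 1) ^ (1 - p) := by
    rw [← mul_rpow hu₀.le hx₁.le, hu, div_mul_cancel₀ _ hx₁.ne']
  have hpow : (x + 1) ^ (-p) = (x + 1) ^ (1 - p) * (x + 1)⁻¹ := by
    rw [← rpow_neg_one, ← rpow_add hx₁]; ring_nf
  rw [hsplit, hpow]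
  nlinarith [mul_le_mul_of_nonneg_right hbern (rpow_pos_of_pos hx₁ (1 - p)).le]

lemma mul_sum_range_rpow_neg_le {p x : ℝ} (hp : 1 ≤ p) (hx : 0 < x) (n : ℕ) :
    (p - 1) * ∑ j ∈ range n, (x + j + 1) ^ (-p) ≤ x ^ (1 - p) := by
  calc (p - 1) * ∑ j ∈ range n, (x + j + 1) ^ (-p)
      ≤ ∑ j ∈ range n, ((x + j) ^ (1 - p) - (x + (j + 1 : ℕ)) ^ (1 - p)) := by
        rw [mul_sum]
        gcongr with j
        push_cast
        rw [← add_assoc]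
        exact rpow_neg_le_sub_rpow hp (by positivity)
    _ = x ^ (1 - p) - (x + n) ^ (1 - p) := by
        simpa using sum_range_sub' (fun j : ℕ => (x + j) ^ (1 - p)) n
    _ ≤ x ^ (1 - p) := sub_le_self _ (by positivity)

lemma summable_of_le_rpow_neg {f : ℕ → ℝ} {c p : ℝ} (hp : 1 < p)
    (hf : ∀ n, 1 ≤ n → 0 ≤ f n ∧ f n ≤ c * (n : ℝ) ^ (-p)) : Summable f := by
  refine Summable.of_norm_bounded_eventually_nat
    ((Real.summable_nat_rpow.2 (neg_lt_neg hp)).mul_left c) ?_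
  filter_upwards [Filter.eventually_ge_atTop 1] with n hn
  rw [norm_of_nonneg (hf n hn).1]
  exact (hf n hn).2

lemma tsum_nat_add_le_of_le_rpow_neg {f : ℕ → ℝ} {c p : ℝ} (hp : 1 < p)
    (hf : ∀ n, 1 ≤ n → 0 ≤ f n ∧ f n ≤ c * (n : ℝ) ^ (-p)) {i : ℕ} (hi : 1 ≤ i) :
    ∑' j, f (i + j) ≤ c * (p / (p - 1)) * (i : ℝ) ^ (1 - p) := by
  have hc : 0 ≤ c := by simpa using (hf 1 le_rfl).1.trans (hf 1 le_rfl).2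
  have hi₀ : (0 : ℝ) < i := by exact_mod_cast hi
  have hp₁ : 0 < p - 1 := by linarith
  have hf' : ∀ j, 0 ≤ f (i + j) ∧ f (i + j) ≤ c * ((i : ℝ) + j) ^ (-p) := fun j => by
    simpa using hf (i + j) (by omega)
  refine tsum_le_of_sum_range_le (fun j => (hf' j).1) fun n => ?_
  calc ∑ j ∈ range n, f (i + j) ≤ ∑ j ∈ range (n + 1), f (i + j) :=
        sum_le_sum_of_subset_of_nonneg (by simp) fun j _ _ => (hf' j).1
    _ = f i + ∑ j ∈ range n, f (i + (j + 1)) := by rw [sum_range_succ', add_comm, add_zero]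
    _ ≤ c * (i : ℝ) ^ (-p) + c * ∑ j ∈ range n, ((i : ℝ) + j + 1) ^ (-p) := by
        rw [mul_sum]
        gcongr with j
        · simpa using (hf' 0).2
        · simpa [add_assoc] using (hf' (j + 1)).2
    _ ≤ c * (i : ℝ) ^ (1 - p) + c * ((i : ℝ) ^ (1 - p) / (p - 1)) := by
        have hhead : (i : ℝ) ^ (-p) ≤ (i : ℝ) ^ (1 - p) :=
          rpow_le_rpow_of_exponent_le (by exact_mod_cast hi) (by linarith)
        have htail : ∑ j ∈ range n, ((i : ℝ) + j + 1) ^ (-p) ≤ (i : ℝ) ^ (1 - p) / (p - 1) := by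
          rw [le_div_iff₀ hp₁, mul_comm]
          exact mul_sum_range_rpow_neg_le hp.le hi₀ n
        gcongr
    _ = c * (p / (p - 1)) * (i : ℝ) ^ (1 - p) := by field_simp; ring

lemma rpow_neg_mul_le_tsum_nat_add {f : ℕ → ℝ} {c p : ℝ} (hc : 0 ≤ c) (hp : 0 ≤ p)
    (hf : ∀ n : ℕ, 1 ≤ n → c * (n : ℝ) ^ (-p) ≤ f n) (hsum : Summable f) {i : ℕ} (hi : 1 ≤ i) :
    c * 2 ^ (-p) * (i : ℝ) ^ (1 - p) ≤ ∑' j, f (i + j) := by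
  have hi₀ : (0 : ℝ) < i := by exact_mod_cast hi
  have hf' : ∀ j, c * ((i : ℝ) + j) ^ (-p) ≤ f (i + j) := fun j => by
    simpa using hf (i + j) (by omega)
  have htail : Summable fun j => f (i + j) := by
    simpa only [add_comm i] using (summable_nat_add_iff i).2 hsum
  calc c * 2 ^ (-p) * (i : ℝ) ^ (1 - p) = ∑ _j ∈ range i, c * (2 * (i : ℝ)) ^ (-p) := by
        rw [sum_const, card_range, nsmul_eq_mul, mul_rpow zero_le_two hi₀.le, sub_eq_neg_add,
          rpow_add hi₀, rpow_one]
        ring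
    _ ≤ ∑ j ∈ range i, f (i + j) := by
        gcongr with j hj
        have hj : (j : ℝ) ≤ i := by exact_mod_cast (mem_range.1 hj).le
        refine le_trans (mul_le_mul_of_nonneg_left ?_ hc) (hf' j)
        exact rpow_le_rpow_of_nonpos (by positivity) (by linarith) (by linarith)
    _ ≤ ∑' j, f (i + j) :=
        htail.sum_le_tsum _ fun j _ => (mul_nonneg hc (by positivity)).trans (hf' j)

/-- **Asymptotics of the Gamma-ratio sum, case `2λμ < 1`** (Lemma 6, third case):
the series `∑_{j=1}^∞ (Γ(j)/Γ(j+1−λμ))²` converges and its tails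
`∑_{j=i}^∞ (Γ(j)/Γ(j+1−λμ))²` are `Θ(i^{2λμ−1})` as `i → ∞`. -/
theorem gamma_ratio_sum_asymptotics_lt (lam mu : ℝ) (hlam : 0 < lam) (hmu : 0 < mu)
    (h : lam * mu < 1 / 2) :
    Summable (fun j : ℕ =>
      (Real.Gamma ((j : ℝ) + 1) / Real.Gamma ((j : ℝ) + 1 + 1 - lam * mu)) ^ 2) ∧
    ∃ c₁ : ℝ, 0 < c₁ ∧ ∃ c₂ : ℝ, 0 < c₂ ∧ ∃ i₀ : ℕ, ∀ i : ℕ, i₀ ≤ i →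
      c₁ * (i : ℝ) ^ (2 * lam * mu - 1) ≤
        (∑' j : ℕ, (Real.Gamma (((i + j : ℕ)) : ℝ) /
          Real.Gamma (((i + j : ℕ) : ℝ) + 1 - lam * mu)) ^ 2) ∧
      (∑' j : ℕ, (Real.Gamma (((i + j : ℕ)) : ℝ) /
          Real.Gamma (((i + j : ℕ) : ℝ) + 1 - lam * mu)) ^ 2) ≤
        c₂ * (i : ℝ) ^ (2 * lam * mu - 1) := by
  have ha : 0 < lam * mu := mul_pos hlam hmu
  set p := 2 * (1 - lam * mu)
  have hp : 1 < p := by linarith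
  set F : ℕ → ℝ := fun n => (Gamma n / Gamma ((n : ℝ) + 1 - lam * mu)) ^ 2
  have hF : ∀ n : ℕ, 1 ≤ n → F n ∈ Set.Icc ((n : ℝ) ^ (-p)) (4 * (n : ℝ) ^ (-p)) := fun n hn => by
    have := sq_Gamma_div_Gamma_add_mem_Icc (x := n) (s := 1 - lam * mu) (by linarith)
      (by linarith) (by linarith [show (1 : ℝ) ≤ n by exact_mod_cast hn])
    rwa [← add_sub_assoc] at this
  have hsum : Summable F :=
    summable_of_le_rpow_neg hp fun n hn => ⟨by positivity, (hF n hn).2⟩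
  have hexp : 2 * lam * mu - 1 = 1 - p := by ring
  refine ⟨?_, 2 ^ (-p), by positivity, 4 * (p / (p - 1)), by positivity, 1, fun i hi => ?_⟩
  · simpa [F, add_assoc] using (summable_nat_add_iff 1).2 hsum
  rw [hexp]
  constructor
  · simpa only [one_mul] using rpow_neg_mul_le_tsum_nat_add zero_le_one (by linarith)
      (fun n hn => by simpa only [one_mul] using (hF n hn).1) hsum hi
  · exact tsum_nat_add_le_of_le_rpow_neg hp (fun n hn => ⟨by positivity, (hF n hn).2⟩) hi
end

section
/- Key scalar comparison between diffusion and consensus modes (chain of inequalities in the proof of Theorem 4): Let 0 < D < 1, λ > 0, and μ > 0 with 2λμ > 1. Then limsup_{i→∞} i² · i^{−2λμ} ∑_{j=1}^{i−1} D^{2(i−j)} j^{2λμ−2} ≤ 1/log(D^{−2}) ≤ liminf_{i→∞} i² · i^{−2λμ/D} ∑_{j=1}^{i−1} D^{2(i−j−1)} j^{2λμ/D − 2}. In particular, each term of the consensus-mode sum asymptotically dominates (up to order i^{−2}) the corresponding diffusion-mode term. -/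
/-!
With `x = D²` and `p` the exponent, `i^{2-p} ∑ D^{2(i-j)} j^{p-2} = ∑_j x^{i-j} (j/i)^{p-2}`.
Indexed by `k = i - j`, the factor `(1 - k/i)^{p-2}` tends to `1` for each fixed `k` and is
bounded by a power of `k + 2`, so by Tannery's theorem the two sums converge to the geometric
sums `x/(1-x)` and `1/(1-x)`. These bracket `1/log x⁻¹`, by `log y ≤ y - 1` applied at
`y = x` and `y = x⁻¹`.
-/

open Filter Topology Finset

theorem Finset.sum_Icc_one_pred_eq_sum_range_reflect {M : Type*} [AddCommMonoid M]
    (g : ℕ → M) (n : ℕ) :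
    ∑ j ∈ Icc 1 (n - 1), g j = ∑ k ∈ range (n - 1), g (n - 1 - k) := by
  refine sum_nbij' (n - 1 - ·) (n - 1 - ·) ?_ ?_ ?_ ?_ fun j hj => ?_
  rotate_right
  · rw [mem_Icc] at hj
    rw [show n - 1 - (n - 1 - j) = j by omega]
  all_goals intro a ha; simp only [mem_Icc, mem_range] at ha ⊢; omega

theorem tendsto_sum_range_of_dominated {G : Type*} [NormedAddCommGroup G] [CompleteSpace G]
    {f : ℕ → ℕ → G} {g : ℕ → G} {bound : ℕ → ℝ} {n : ℕ → ℕ}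
    (hn : Tendsto n atTop atTop) (h_sum : Summable bound)
    (h_lim : ∀ k, Tendsto (f · k) atTop (𝓝 (g k)))
    (h_bound : ∀ i, ∀ k < n i, ‖f i k‖ ≤ bound k) :
    Tendsto (fun i => ∑ k ∈ range (n i), f i k) atTop (𝓝 (∑' k, g k)) := by
  set F : ℕ → ℕ → G := fun i k => if k < n i then f i k else 0
  have hF : ∀ i, ∑' k, F i k = ∑ k ∈ range (n i), f i k := fun i => by
    rw [tsum_eq_sum (s := range (n i)) fun k hk => if_neg (by simpa using hk)]
    exact sum_congr rfl fun k hk => if_pos (by simpa using hk)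
  refine (tendsto_tsum_of_dominated_convergence h_sum (fun k => ?_)
    (.of_forall fun i k => ?_)).congr hF
  · refine (h_lim k).congr' ?_
    filter_upwards [hn.eventually_gt_atTop k] with i hi
    exact (if_pos hi).symm
  · by_cases hk : k < n i
    · simpa [F, hk] using h_bound i k hk
    · obtain ⟨i₀, hi₀⟩ := (hn.eventually_gt_atTop k).exists
      simpa [F, hk] using (norm_nonneg _).trans (h_bound i₀ k hi₀)

theorem Real.rpow_le_pow_of_inv_le {r M q : ℝ} {N : ℕ} (hr0 : 0 < r) (hr1 : r ≤ 1)
    (hM : r⁻¹ ≤ M) (hN : |q| ≤ N) : r ^ q ≤ M ^ N :=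
  calc r ^ q ≤ r ^ (-(N : ℝ)) :=
        Real.rpow_le_rpow_of_exponent_ge hr0 hr1 (by linarith [neg_abs_le q])
    _ = r⁻¹ ^ N := by rw [Real.rpow_neg hr0.le, Real.rpow_natCast, inv_pow]
    _ ≤ M ^ N := pow_le_pow_left₀ (inv_pos.2 hr0).le hM N

theorem summable_add_pow_mul_geometric {x : ℝ} (hx0 : 0 < x) (hx1 : x < 1) (m N : ℕ) :
    Summable fun k : ℕ => ((k : ℝ) + m) ^ N * x ^ k := by
  have h := (summable_pow_mul_geometric_of_norm_lt_one N
    (by rwa [Real.norm_of_nonneg hx0.le] : ‖x‖ < 1)).comp_injective (add_left_injective m)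
  refine (h.mul_right (x ^ m)⁻¹).congr fun k => ?_
  simp only [Function.comp_apply, Nat.cast_add, pow_add]
  field_simp

theorem tendsto_natCast_sub_div_self (k : ℕ) :
    Tendsto (fun i : ℕ => ((i - k : ℕ) : ℝ) / i) atTop (𝓝 1) := by
  refine ((tendsto_natCast_div_add_atTop (k : ℝ)).comp (tendsto_sub_atTop_nat k)).congr' ?_
  filter_upwards [eventually_ge_atTop k] with i hi
  simp [Nat.cast_sub hi]

theorem tendsto_sum_geometric_mul_rpow_div {x : ℝ} (hx0 : 0 < x) (hx1 : x < 1) (q : ℝ) :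
    Tendsto (fun i : ℕ => ∑ j ∈ Icc 1 (i - 1), x ^ (i - j - 1) * ((j : ℝ) / i) ^ q)
      atTop (𝓝 (1 - x)⁻¹) := by
  have hreflect : ∀ i : ℕ, ∑ j ∈ Icc 1 (i - 1), x ^ (i - j - 1) * ((j : ℝ) / i) ^ q
      = ∑ k ∈ range (i - 1), x ^ k * (((i - (k + 1) : ℕ) : ℝ) / i) ^ q := fun i => by
    rw [sum_Icc_one_pred_eq_sum_range_reflect]
    refine sum_congr rfl fun k hk => ?_
    rw [mem_range] at hk
    rw [show i - (i - 1 - k) - 1 = k by omega, show i - 1 - k = i - (k + 1) by omega]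
  simp only [hreflect, ← tsum_geometric_of_lt_one hx0.le hx1]
  refine tendsto_sum_range_of_dominated (tendsto_sub_atTop_nat 1)
    (summable_add_pow_mul_geometric hx0 hx1 2 ⌈|q|⌉₊) (fun k => ?_) fun i k hk => ?_
  · simpa using ((tendsto_natCast_sub_div_self (k + 1)).rpow_const
      (Or.inl one_ne_zero)).const_mul (x ^ k)
  · set j := i - (k + 1)
    have hj : (1 : ℝ) ≤ j := by norm_cast; omega
    have hi : (i : ℝ) = j + k + 1 := by norm_cast; omega
    have hratio : ((j : ℝ) / i)⁻¹ ≤ (k : ℝ) + 2 := by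
      rw [inv_div, div_le_iff₀ (by linarith), hi]
      nlinarith
    have hr0 : (0 : ℝ) < j / i := div_pos (by linarith) (by linarith)
    have hr1 : (j : ℝ) / i ≤ 1 := (div_le_one (by linarith)).2 (by linarith)
    rw [Real.norm_of_nonneg (by positivity), mul_comm]
    gcongr
    exact Real.rpow_le_pow_of_inv_le hr0 hr1 (by exact_mod_cast hratio) (Nat.le_ceil _)

theorem tendsto_sum_geometric_succ_mul_rpow_div {x : ℝ} (hx0 : 0 < x) (hx1 : x < 1) (q : ℝ) :
    Tendsto (fun i : ℕ => ∑ j ∈ Icc 1 (i - 1), x ^ (i - j) * ((j : ℝ) / i) ^ q)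
      atTop (𝓝 (x / (1 - x))) := by
  have hshift : ∀ i : ℕ, ∑ j ∈ Icc 1 (i - 1), x ^ (i - j) * ((j : ℝ) / i) ^ q
      = x * ∑ j ∈ Icc 1 (i - 1), x ^ (i - j - 1) * ((j : ℝ) / i) ^ q := fun i => by
    rw [mul_sum]
    refine sum_congr rfl fun j hj => ?_
    rw [mem_Icc] at hj
    rw [← mul_assoc, ← pow_succ', show i - j - 1 + 1 = i - j by omega]
  simp only [hshift, div_eq_mul_inv x]
  exact (tendsto_sum_geometric_mul_rpow_div hx0 hx1 q).const_mul x

theorem mul_rpow_neg_mul_sum_eq_sum_mul_div_rpow (p : ℝ) (i : ℕ) (a : ℕ → ℝ) :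
    (i : ℝ) ^ 2 * ((i : ℝ) ^ (-p) * ∑ j ∈ Icc 1 (i - 1), a j * (j : ℝ) ^ (p - 2))
      = ∑ j ∈ Icc 1 (i - 1), a j * ((j : ℝ) / i) ^ (p - 2) := by
  rw [mul_sum, mul_sum]
  refine sum_congr rfl fun j hj => ?_
  have hi : (0 : ℝ) < i := by
    rw [mem_Icc] at hj
    exact_mod_cast (by omega : 0 < i)
  have hpow : (i : ℝ) ^ 2 * (i : ℝ) ^ (-p) = ((i : ℝ) ^ (p - 2))⁻¹ := by
    rw [← Real.rpow_neg hi.le, ← Real.rpow_natCast, ← Real.rpow_add hi]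
    norm_num [sub_eq_add_neg]
  rw [Real.div_rpow (Nat.cast_nonneg j) hi.le, div_eq_mul_inv, ← hpow]
  ring

theorem div_one_sub_le_one_div_log_inv {x : ℝ} (hx0 : 0 < x) (hx1 : x < 1) :
    x / (1 - x) ≤ 1 / Real.log x⁻¹ := by
  have hlog : 0 < Real.log x⁻¹ := Real.log_pos (one_lt_inv₀ hx0 |>.2 hx1)
  rw [div_le_div_iff₀ (by linarith) hlog]
  have := Real.log_le_sub_one_of_pos (inv_pos.2 hx0)
  calc x * Real.log x⁻¹ ≤ x * (x⁻¹ - 1) := by gcongr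
    _ = 1 * (1 - x) := by field_simp

theorem one_div_log_inv_le_one_div_one_sub {x : ℝ} (hx0 : 0 < x) (hx1 : x < 1) :
    1 / Real.log x⁻¹ ≤ 1 / (1 - x) := by
  have := Real.log_le_sub_one_of_pos hx0
  exact one_div_le_one_div_of_le (by linarith) (by rw [Real.log_inv]; linarith)

theorem diffusion_consensus_mode_comparison_general (D lam mu : ℝ)
    (hD0 : 0 < D) (hD1 : D < 1) :
    (limsup (fun i : ℕ => (i : ℝ) ^ 2 * ((i : ℝ) ^ (-(2 * lam * mu)) *
        ∑ j ∈ Finset.Icc 1 (i - 1),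
          D ^ (2 * (i - j)) * (j : ℝ) ^ (2 * lam * mu - 2))) atTop
      ≤ 1 / Real.log (D⁻¹ ^ 2)) ∧
    (1 / Real.log (D⁻¹ ^ 2) ≤
      liminf (fun i : ℕ => (i : ℝ) ^ 2 * ((i : ℝ) ^ (-(2 * lam * mu / D)) *
        ∑ j ∈ Finset.Icc 1 (i - 1),
          D ^ (2 * (i - j - 1)) * (j : ℝ) ^ (2 * lam * mu / D - 2))) atTop) := by
  have hx0 : 0 < D ^ 2 := by positivity
  have hx1 : D ^ 2 < 1 := by nlinarith
  simp only [mul_rpow_neg_mul_sum_eq_sum_mul_div_rpow, pow_mul, inv_pow]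
  constructor
  · rw [(tendsto_sum_geometric_succ_mul_rpow_div hx0 hx1 _).limsup_eq]
    exact div_one_sub_le_one_div_log_inv hx0 hx1
  · rw [(tendsto_sum_geometric_mul_rpow_div hx0 hx1 _).liminf_eq]
    exact (one_div_log_inv_le_one_div_one_sub hx0 hx1).trans_eq (one_div _)

/-- **Key scalar comparison between diffusion and consensus modes** (chain of inequalities
in the proof of Theorem 4): for `0 < D < 1`, `λ > 0`, `μ > 0` with `2λμ > 1`,
`limsup i² · i^{−2λμ} ∑_{j=1}^{i−1} D^{2(i−j)} j^{2λμ−2} ≤ 1/log(D⁻²)`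
and `1/log(D⁻²) ≤ liminf i² · i^{−2λμ/D} ∑_{j=1}^{i−1} D^{2(i−j−1)} j^{2λμ/D−2}`. -/
theorem diffusion_consensus_mode_comparison (D lam mu : ℝ)
    (hD0 : 0 < D) (hD1 : D < 1) (hlam : 0 < lam) (hmu : 0 < mu)
    (h2 : 1 < 2 * lam * mu) :
    (limsup (fun i : ℕ => (i : ℝ) ^ 2 * ((i : ℝ) ^ (-(2 * lam * mu)) *
        ∑ j ∈ Finset.Icc 1 (i - 1),
          D ^ (2 * (i - j)) * (j : ℝ) ^ (2 * lam * mu - 2))) atTop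
      ≤ 1 / Real.log (D⁻¹ ^ 2)) ∧
    (1 / Real.log (D⁻¹ ^ 2) ≤
      liminf (fun i : ℕ => (i : ℝ) ^ 2 * ((i : ℝ) ^ (-(2 * lam * mu / D)) *
        ∑ j ∈ Finset.Icc 1 (i - 1),
          D ^ (2 * (i - j - 1)) * (j : ℝ) ^ (2 * lam * mu / D - 2))) atTop) :=
  diffusion_consensus_mode_comparison_general D lam mu hD0 hD1
end
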